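/- For a positive integer n, the spiral permutation δ_n of the set {1, 2, …, n}, defined by δ_n(x) = 2x if 2x ≤ n and δ_n(x) = 2n + 1 − 2x if 2x > n, is an n-cycle (i.e., the cyclic group it generates acts transitively on {1, …, n}, equivalently δ_n has a single orbit of length n) if and only if 2n + 1 is a prime number and, in the multiplicative group (ZMod (2n+1))ˣ, either 2 has order 2n (2 is a primitive root modulo 2n+1), or 2 has order n and n is odd. The integers n satisfying this condition are called Queneau numbers: they are exactly the n for which a generalized sestina (quenine, or n-ine) of order n can be composed, since the permutation of end-words from one stanza to the next must generate the full cycle of length n. -/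
import Mathlib

namespace QAux

variable {n : ℕ}

lemma step (δ : Fin n → Fin n)
    (hδ : ∀ x : Fin n, ((δ x : ℕ) + 1) =
      if 2 * ((x : ℕ) + 1) ≤ n then 2 * ((x : ℕ) + 1) else 2 * n + 1 - 2 * ((x : ℕ) + 1))
    (x : Fin n) :
    (((δ x : ℕ) + 1 : ℕ) : ZMod (2*n+1)) = 2 * (((x:ℕ)+1 : ℕ) : ZMod (2*n+1)) ∨
    (((δ x : ℕ) + 1 : ℕ) : ZMod (2*n+1)) = -(2 * (((x:ℕ)+1 : ℕ) : ZMod (2*n+1))) := by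
  rcases le_or_gt (2*((x:ℕ)+1)) n with h | h
  · left; rw [hδ x, if_pos h]; push_cast; ring
  · right
    rw [hδ x, if_neg (not_le.mpr h)]
    have hle : 2*((x:ℕ)+1) ≤ 2*n+1 := by have := x.isLt; omega
    rw [Nat.cast_sub hle]
    have h0 : ((2*n+1 : ℕ) : ZMod (2*n+1)) = 0 := ZMod.natCast_self _
    rw [h0]; push_cast; ring

lemma iter (δ : Fin n → Fin n)
    (hδ : ∀ x : Fin n, ((δ x : ℕ) + 1) =
      if 2 * ((x : ℕ) + 1) ≤ n then 2 * ((x : ℕ) + 1) else 2 * n + 1 - 2 * ((x : ℕ) + 1))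
    (x : Fin n) (k : ℕ) :
    (((δ^[k] x : Fin n) : ℕ) + 1 : ℕ) = ((2:ZMod (2*n+1))^k * (((x:ℕ)+1 : ℕ) : ZMod (2*n+1))) ∨
    (((δ^[k] x : Fin n) : ℕ) + 1 : ℕ) = -((2:ZMod (2*n+1))^k * (((x:ℕ)+1 : ℕ) : ZMod (2*n+1))) := by
  induction k with
  | zero => left; simp
  | succ k ih =>
    rw [Function.iterate_succ_apply']
    rcases step δ hδ (δ^[k] x) with h | h <;> rcases ih with h' | h' <;>
      [left; right; right; left] <;> rw [h, h'] <;> ring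

lemma inj (hn : 0 < n) (a b : Fin n)
    (h : (((a:ℕ)+1 : ℕ) : ZMod (2*n+1)) = (((b:ℕ)+1 : ℕ) : ZMod (2*n+1)) ∨
         (((a:ℕ)+1 : ℕ) : ZMod (2*n+1)) = -(((b:ℕ)+1 : ℕ) : ZMod (2*n+1))) : a = b := by
  have ha := a.isLt; have hb := b.isLt
  rcases h with h | h
  · have := congrArg ZMod.val h
    rw [ZMod.val_cast_of_lt (by omega), ZMod.val_cast_of_lt (by omega)] at this
    exact Fin.ext (by omega)
  · exfalso
    have hneg : -((((b:ℕ)+1 : ℕ)) : ZMod (2*n+1)) = (((2*n - (b:ℕ) : ℕ)) : ZMod (2*n+1)) := by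
      have h1 : ((((b:ℕ)+1 : ℕ)) : ZMod (2*n+1)) + (((2*n - (b:ℕ) : ℕ)) : ZMod (2*n+1)) = 0 := by
        rw [← Nat.cast_add]
        have h2 : ((b:ℕ)+1) + (2*n - (b:ℕ)) = 2*n+1 := by omega
        rw [h2]; exact ZMod.natCast_self _
      linear_combination -h1
    rw [hneg] at h
    have := congrArg ZMod.val h
    rw [ZMod.val_cast_of_lt (by omega), ZMod.val_cast_of_lt (by omega)] at this
    omega

lemma ne_zero' (a : Fin n) : (((a:ℕ)+1 : ℕ) : ZMod (2*n+1)) ≠ 0 := by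
  have ha := a.isLt
  intro h
  have := congrArg ZMod.val h
  rw [ZMod.val_cast_of_lt (by omega)] at this
  simp at this


variable {n : ℕ}

lemma neg_one_order (hn : 0 < n) (hp : Nat.Prime (2*n+1)) :
    orderOf (-1 : (ZMod (2*n+1))ˣ) = 2 := by
  haveI : Fact (2 < 2*n+1) := ⟨by omega⟩
  refine orderOf_eq_prime (by simp [pow_two]) ?_
  intro h
  have : (-1 : ZMod (2*n+1)) = 1 := by
    have := congrArg Units.val h
    simpa using this
  exact ZMod.neg_one_ne_one this

lemma backward_units (hn : 0 < n) (hp : Nat.Prime (2*n+1))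
    (u : (ZMod (2*n+1))ˣ)
    (hcond : orderOf u = 2*n ∨ (orderOf u = n ∧ Odd n)) :
    ∀ g : (ZMod (2*n+1))ˣ, ∃ k : ℕ, g = u^k ∨ g = -u^k := by
  haveI : Fact (Nat.Prime (2*n+1)) := ⟨hp⟩
  have hcard : Nat.card (ZMod (2*n+1))ˣ = 2*n := by
    rw [Nat.card_eq_fintype_card, ZMod.card_units_eq_totient, Nat.totient_prime hp]
    omega
  set S := Subgroup.zpowers u ⊔ Subgroup.zpowers (-1 : (ZMod (2*n+1))ˣ) with hS
  have huS : u ∈ S := Subgroup.mem_sup_left (Subgroup.mem_zpowers u)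
  have hnegS : (-1 : (ZMod (2*n+1))ˣ) ∈ S := Subgroup.mem_sup_right (Subgroup.mem_zpowers _)
  have hdvd1 : orderOf u ∣ Nat.card S := Subgroup.orderOf_dvd_natCard S huS
  have hdvd2 : (2:ℕ) ∣ Nat.card S := by
    have h2 := Subgroup.orderOf_dvd_natCard S hnegS
    rwa [neg_one_order hn hp] at h2
  have hdvd : 2*n ∣ Nat.card S := by
    rcases hcond with h | ⟨h, hodd⟩
    · rwa [h] at hdvd1
    · rw [h] at hdvd1
      exact (Nat.coprime_two_left.mpr hodd).mul_dvd_of_dvd_of_dvd hdvd2 hdvd1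
  have hStop : S = ⊤ := by
    apply Subgroup.eq_top_of_card_eq
    rw [hcard]
    have hd := Subgroup.card_subgroup_dvd_card S
    rw [hcard] at hd
    exact Nat.dvd_antisymm hd hdvd
  intro g
  have hg : g ∈ S := hStop ▸ Subgroup.mem_top g
  rw [hS, Subgroup.mem_sup] at hg
  obtain ⟨y, hy, z, hz, hyz⟩ := hg
  obtain ⟨k, hk⟩ := (Submonoid.mem_powers_iff y u).mp (mem_powers_iff_mem_zpowers.mpr hy)
  obtain ⟨j, hj⟩ := (Submonoid.mem_powers_iff z (-1)).mp (mem_powers_iff_mem_zpowers.mpr hz)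
  refine ⟨k, ?_⟩
  rcases Nat.even_or_odd j with hev | hod
  · left; rw [← hyz, ← hk, ← hj, hev.neg_one_pow, mul_one]
  · right; rw [← hyz, ← hk, ← hj, hod.neg_one_pow, mul_neg_one]

lemma forward_order (hn : 0 < n) (hp : Nat.Prime (2*n+1))
    (u : (ZMod (2*n+1))ˣ)
    (hall : ∀ g : (ZMod (2*n+1))ˣ, ∃ k : ℕ, g = u^k ∨ g = -u^k) :
    orderOf u = 2*n ∨ (orderOf u = n ∧ Odd n) := by
  haveI : Fact (Nat.Prime (2*n+1)) := ⟨hp⟩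
  have hcard : Nat.card (ZMod (2*n+1))ˣ = 2*n := by
    rw [Nat.card_eq_fintype_card, ZMod.card_units_eq_totient, Nat.totient_prime hp]
    omega
  -- surjection from zpowers u × zpowers (-1)
  have hsurj : Function.Surjective
      (fun p : Subgroup.zpowers u × Subgroup.zpowers (-1 : (ZMod (2*n+1))ˣ) => (p.1 : (ZMod (2*n+1))ˣ) * p.2) := by
    intro g
    obtain ⟨k, hk | hk⟩ := hall g
    · exact ⟨(⟨u^k, Subgroup.pow_mem _ (Subgroup.mem_zpowers u) k⟩, ⟨1, Subgroup.one_mem _⟩), by simp [hk]⟩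
    · exact ⟨(⟨u^k, Subgroup.pow_mem _ (Subgroup.mem_zpowers u) k⟩, ⟨-1, Subgroup.mem_zpowers _⟩), by simp [hk]⟩
  have hle : 2*n ≤ orderOf u * 2 := by
    have := Nat.card_le_card_of_surjective _ hsurj
    rwa [hcard, Nat.card_prod, Nat.card_zpowers, Nat.card_zpowers, neg_one_order hn hp] at this
  have hdvd : orderOf u ∣ 2*n := by
    have := orderOf_dvd_natCard u
    rwa [hcard] at this
  obtain ⟨c, hc⟩ := hdvd
  have hupos : 0 < orderOf u := orderOf_pos u
  have hc2 : c = 1 ∨ c = 2 := by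
    rcases Nat.lt_or_ge c 3 with h | h
    · interval_cases c <;> omega
    · exfalso; nlinarith
  rcases hc2 with rfl | rfl
  · left; omega
  · right
    have hord : orderOf u = n := by omega
    refine ⟨hord, ?_⟩
    by_contra heven
    rw [Nat.not_odd_iff_even] at heven
    obtain ⟨t, ht⟩ := heven
    have htpos : 0 < t := by omega
    have hv2 : (u^t)^2 = 1 := by
      rw [← pow_mul]
      have : t * 2 = orderOf u := by omega
      rw [this, pow_orderOf_eq_one]
    have hv1 : u^t ≠ 1 := by
      intro h
      have := orderOf_dvd_iff_pow_eq_one.mpr h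
      rw [hord] at this
      have := Nat.le_of_dvd htpos this
      omega
    -- u^t = -1
    have hvz : ((u^t : (ZMod (2*n+1))ˣ) : ZMod (2*n+1))^2 = 1 := by
      rw [← Units.val_pow_eq_pow_val, hv2, Units.val_one]
    rcases sq_eq_one_iff.mp hvz with h | h
    · exact hv1 (Units.ext (by simpa using h))
    · -- -1 ∈ zpowers u, so zpowers u = ⊤, card contradiction
      have hneg : (-1 : (ZMod (2*n+1))ˣ) = u^t := by
        apply Units.ext; simpa using h.symm
      have htop : Subgroup.zpowers u = ⊤ := by
        rw [eq_top_iff]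
        intro g _
        obtain ⟨k, hk | hk⟩ := hall g
        · exact hk ▸ Subgroup.pow_mem _ (Subgroup.mem_zpowers u) k
        · have h3 : -u^k = u^(t+k) := by rw [pow_add, ← hneg, neg_one_mul]
          rw [hk, h3]
          exact Subgroup.pow_mem _ (Subgroup.mem_zpowers u) _
      have := Nat.card_zpowers u
      rw [htop, Subgroup.card_top, hcard, hord] at this
      omega


variable {n : ℕ}

theorem queneau_number_characterization (n : ℕ) (hn : 0 < n)
    (δ : Fin n → Fin n)
    (hδ : ∀ x : Fin n, ((δ x : ℕ) + 1) =
      if 2 * ((x : ℕ) + 1) ≤ n then 2 * ((x : ℕ) + 1) else 2 * n + 1 - 2 * ((x : ℕ) + 1)) :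
    (∀ x y : Fin n, ∃ k : ℕ, δ^[k] x = y) ↔
      (Nat.Prime (2 * n + 1) ∧
        (orderOf (ZMod.unitOfCoprime 2
            (Nat.coprime_two_left.mpr (odd_two_mul_add_one n)) : (ZMod (2 * n + 1))ˣ) = 2 * n ∨
          (orderOf (ZMod.unitOfCoprime 2
            (Nat.coprime_two_left.mpr (odd_two_mul_add_one n)) : (ZMod (2 * n + 1))ˣ) = n ∧
            Odd n))) := by
  set u : (ZMod (2*n+1))ˣ :=
    ZMod.unitOfCoprime 2 (Nat.coprime_two_left.mpr (odd_two_mul_add_one n)) with hu_def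
  have hu : (u : ZMod (2*n+1)) = 2 := by
    rw [hu_def, ZMod.coe_unitOfCoprime]; norm_num
  have h2unit : IsUnit (2 : ZMod (2*n+1)) := hu ▸ u.isUnit
  constructor
  · intro htrans
    -- Claim A: every nonzero residue is ± a power of 2
    have claimA1 : ∀ a : ZMod (2*n+1), a.val ≠ 0 → a.val ≤ n →
        ∃ k : ℕ, a = 2^k ∨ a = -2^k := by
      intro a h1 h2
      set y : Fin n := ⟨a.val - 1, by omega⟩ with hy_def
      have hy : (((y:ℕ)+1 : ℕ) : ZMod (2*n+1)) = a := by
        have hyv : (y:ℕ)+1 = a.val := by rw [hy_def]; simp; omega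
        rw [hyv, ZMod.natCast_val, ZMod.cast_id]
      obtain ⟨k, hk⟩ := htrans ⟨0, hn⟩ y
      have hi := iter δ hδ ⟨0, hn⟩ k
      rw [hk] at hi
      have h01 : ((((⟨0, hn⟩ : Fin n):ℕ)+1 : ℕ) : ZMod (2*n+1)) = 1 := by norm_num
      rw [h01, mul_one, hy] at hi
      exact ⟨k, hi⟩
    have claimA : ∀ a : ZMod (2*n+1), a ≠ 0 → ∃ k : ℕ, a = 2^k ∨ a = -2^k := by
      intro a ha
      have hval : a.val ≠ 0 := fun h => ha ((ZMod.val_eq_zero a).mp h)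
      have hlt : a.val < 2*n+1 := ZMod.val_lt a
      rcases le_or_gt a.val n with h | h
      · exact claimA1 a hval h
      · have hb : (-a).val = 2*n+1 - a.val := by rw [ZMod.neg_val, if_neg ha]
        obtain ⟨k, hk | hk⟩ := claimA1 (-a) (by omega) (by omega)
        · exact ⟨k, Or.inr (by rw [← hk, neg_neg])⟩
        · exact ⟨k, Or.inl (by rw [← neg_neg a, hk, neg_neg])⟩
    -- primality
    have hprime : Nat.Prime (2*n+1) := by
      rw [Nat.prime_def_lt]
      refine ⟨by omega, fun d hd hdvd => ?_⟩
      by_contra hne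
      have hd0 : d ≠ 0 := by
        rintro rfl
        have := Nat.eq_zero_of_zero_dvd hdvd
        omega
      have hdz : ((d:ℕ) : ZMod (2*n+1)) ≠ 0 := by
        rw [Ne, ZMod.natCast_eq_zero_iff]
        intro h
        have := Nat.le_of_dvd (by omega) h
        omega
      obtain ⟨k, hk⟩ := claimA d hdz
      have hunit : IsUnit ((d:ℕ) : ZMod (2*n+1)) := by
        rcases hk with hk | hk
        · rw [hk]; exact h2unit.pow k
        · rw [hk]; exact (h2unit.pow k).neg
      rw [ZMod.isUnit_iff_coprime] at hunit
      have hg := Nat.gcd_eq_left hdvd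
      rw [Nat.Coprime] at hunit
      omega
    refine ⟨hprime, ?_⟩
    apply forward_order hn hprime
    intro g
    haveI : Fact (Nat.Prime (2*n+1)) := ⟨hprime⟩
    obtain ⟨k, hk⟩ := claimA (g : ZMod (2*n+1)) (Units.ne_zero g)
    refine ⟨k, ?_⟩
    rcases hk with hk | hk
    · left; apply Units.ext; rw [Units.val_pow_eq_pow_val, hu]; exact hk
    · right; apply Units.ext
      rw [Units.val_neg, Units.val_pow_eq_pow_val, hu]; exact hk
  · rintro ⟨hprime, hcond⟩
    haveI : Fact (Nat.Prime (2*n+1)) := ⟨hprime⟩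
    have hall := backward_units hn hprime u hcond
    have claimA : ∀ a : ZMod (2*n+1), a ≠ 0 → ∃ k : ℕ, a = 2^k ∨ a = -2^k := by
      intro a ha
      obtain ⟨g, hg⟩ := isUnit_iff_ne_zero.mpr ha
      obtain ⟨k, hk | hk⟩ := hall g
      · refine ⟨k, Or.inl ?_⟩
        rw [← hg, hk, Units.val_pow_eq_pow_val, hu]
      · refine ⟨k, Or.inr ?_⟩
        rw [← hg, hk, Units.val_neg, Units.val_pow_eq_pow_val, hu]
    intro x y
    have hbx := ne_zero' (n := n) x
    have hby := ne_zero' (n := n) y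
    obtain ⟨k, hk⟩ := claimA ((((y:ℕ)+1 : ℕ) : ZMod (2*n+1)) * (((x:ℕ)+1 : ℕ) : ZMod (2*n+1))⁻¹)
      (mul_ne_zero hby (inv_ne_zero hbx))
    refine ⟨k, ?_⟩
    have hc : (((y:ℕ)+1 : ℕ) : ZMod (2*n+1)) = 2^k * (((x:ℕ)+1 : ℕ) : ZMod (2*n+1)) ∨
        (((y:ℕ)+1 : ℕ) : ZMod (2*n+1)) = -(2^k * (((x:ℕ)+1 : ℕ) : ZMod (2*n+1))) := by
      rcases hk with hk | hk
      · left
        calc (((y:ℕ)+1 : ℕ) : ZMod (2*n+1))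
            = (((y:ℕ)+1 : ℕ) : ZMod (2*n+1)) * (((x:ℕ)+1 : ℕ) : ZMod (2*n+1))⁻¹ *
              (((x:ℕ)+1 : ℕ) : ZMod (2*n+1)) := (inv_mul_cancel_right₀ hbx _).symm
          _ = 2^k * (((x:ℕ)+1 : ℕ) : ZMod (2*n+1)) := by rw [hk]
      · right
        calc (((y:ℕ)+1 : ℕ) : ZMod (2*n+1))
            = (((y:ℕ)+1 : ℕ) : ZMod (2*n+1)) * (((x:ℕ)+1 : ℕ) : ZMod (2*n+1))⁻¹ *
              (((x:ℕ)+1 : ℕ) : ZMod (2*n+1)) := (inv_mul_cancel_right₀ hbx _).symm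
          _ = -(2^k * (((x:ℕ)+1 : ℕ) : ZMod (2*n+1))) := by rw [hk]; ring
    apply inj hn
    rcases iter δ hδ x k with hi | hi <;> rcases hc with hc | hc
    · left; rw [hi, ← hc]
    · right; rw [hi, hc, neg_neg]
    · right; rw [hi, hc]
    · left; rw [hi, ← hc]

end QAux

/-- Roubaud's theorem characterizing the Queneau numbers: for a positive integer `n`,
the spiral permutation `δ_n` of `{1, …, n}` (here modelled on `Fin n`, with `i : Fin n`
representing the integer `i + 1`), defined by `δ_n x = 2 * x` if `2 * x ≤ n` and
`δ_n x = 2 * n + 1 - 2 * x` otherwise, is an `n`-cycle — i.e. the iterates of `δ_n`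
act transitively on `{1, …, n}`, equivalently `δ_n` has a single orbit of length `n` —
if and only if `2 * n + 1` is prime and, in the multiplicative group `(ZMod (2*n+1))ˣ`,
either `2` has order `2 * n` (it is a primitive root modulo `2*n+1`), or `2` has order
`n` and `n` is odd.  Such `n` are exactly the orders for which a quenine (`n`-ine,
generalized sestina) can be composed. -/
theorem queneau_number_characterization (n : ℕ) (hn : 0 < n)
    (δ : Fin n → Fin n)
    (hδ : ∀ x : Fin n, ((δ x : ℕ) + 1) =
      if 2 * ((x : ℕ) + 1) ≤ n then 2 * ((x : ℕ) + 1) else 2 * n + 1 - 2 * ((x : ℕ) + 1)) :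
    (∀ x y : Fin n, ∃ k : ℕ, δ^[k] x = y) ↔
      (Nat.Prime (2 * n + 1) ∧
        (orderOf (ZMod.unitOfCoprime 2
            (Nat.coprime_two_left.mpr (odd_two_mul_add_one n)) : (ZMod (2 * n + 1))ˣ) = 2 * n ∨
          (orderOf (ZMod.unitOfCoprime 2
            (Nat.coprime_two_left.mpr (odd_two_mul_add_one n)) : (ZMod (2 * n + 1))ˣ) = n ∧
            Odd n))) :=
  QAux.queneau_number_characterization n hn δ hδ
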